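/- arXiv:1808.09430 — 6 statements merged into one kernel-verified Lean document; each statement's English description precedes it below -/
import Mathlib

section
/- Let G = (V, E) be a finite directed graph, v₀ ∈ V, and F ⊆ V a set of 'rejecting' vertices. Then the following are equivalent: (a) every infinite path of G starting at v₀ visits vertices of F only finitely often; (b) there exists a ranking function ρ : V → ℕ such that for every edge (u, v) ∈ E with u reachable from v₀, we have ρ(u) > ρ(v) if u ∈ F, and ρ(u) ≥ ρ(v) if u ∉ F. -/
/-- From a `ReflTransGen` path we can extract a finite walk. -/
lemma exists_walk {V : Type} {E : V → V → Prop} {a b : V}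
    (h : Relation.ReflTransGen E a b) :
    ∃ (f : ℕ → V) (N : ℕ), f 0 = a ∧ f N = b ∧ ∀ i < N, E (f i) (f (i + 1)) := by
  induction h with
  | refl => exact ⟨fun _ => a, 0, rfl, rfl, fun i hi => absurd hi (by omega)⟩
  | @tail b c hab hbc ih =>
    obtain ⟨f, N, h0, hN, hstep⟩ := ih
    refine ⟨fun n => if n ≤ N then f n else c, N + 1, by simp [h0], by simp, ?_⟩
    intro i hi
    rcases lt_or_eq_of_le (Nat.lt_succ_iff.mp hi) with hlt | heq
    · simpa [Nat.le_of_lt hlt, Nat.succ_le_of_lt hlt] using hstep i hlt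
    · subst heq; simpa [hN] using hbc

/-- A path to `u` plus a nonempty cycle at `u` yields an infinite path hitting `u`
infinitely often. -/
lemma exists_infinite_path {V : Type} {E : V → V → Prop} {v0 u v : V}
    (h1 : Relation.ReflTransGen E v0 u) (huv : E u v)
    (hvu : Relation.ReflTransGen E v u) :
    ∃ π : ℕ → V, π 0 = v0 ∧ (∀ n, E (π n) (π (n + 1))) ∧ {n | π n = u}.Infinite := by
  obtain ⟨f1, N1, hf10, hf1N, hf1s⟩ := exists_walk h1
  obtain ⟨f2', N2', hf20, hf2N, hf2s⟩ := exists_walk hvu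
  set N2 := N2' + 1 with hN2
  set f2 : ℕ → V := fun n => if n = 0 then u else f2' (n - 1) with hf2
  have hf2z : f2 0 = u := by simp [hf2]
  have hf2e : f2 N2 = u := by simp [hf2, hN2, hf2N]
  have hf2step : ∀ i < N2, E (f2 i) (f2 (i + 1)) := by
    intro i hi
    rcases Nat.eq_zero_or_pos i with h0 | hpos
    · subst h0
      have e2 : f2 1 = v := by simp [hf2, hf20]
      rw [hf2z, e2]; exact huv
    · have hi' : i - 1 < N2' := by omega
      have e1 : f2 i = f2' (i - 1) := by
        simp only [hf2]; rw [if_neg (by omega)]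
      have e2 : f2 (i + 1) = f2' i := by
        simp only [hf2]; rw [if_neg (by omega)]; congr 1
      have hE := hf2s (i - 1) hi'
      rw [show i - 1 + 1 = i by omega] at hE
      rw [e1, e2]; exact hE
  set π : ℕ → V := fun n => if n < N1 then f1 n else f2 ((n - N1) % N2) with hπ
  have hπu : ∀ k, π (N1 + k * N2) = u := by
    intro k
    simp only [hπ]
    rw [if_neg (by omega), Nat.add_sub_cancel_left, Nat.mul_mod_left, hf2z]
  refine ⟨π, ?_, ?_, ?_⟩
  · rcases Nat.eq_zero_or_pos N1 with h | h
    · have hu : u = v0 := by rw [← hf1N, h, hf10]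
      simp only [hπ]
      rw [if_neg (by omega)]
      simp [h, hf2z, hu]
    · simp [hπ, h, hf10]
  · intro n
    by_cases hn : n + 1 < N1
    · have hn' : n < N1 := by omega
      simpa [hπ, hn, hn'] using hf1s n hn'
    · by_cases hn2 : n < N1
      · have hN1 : n + 1 = N1 := by omega
        have e2 : π (n + 1) = u := by
          simp only [hπ]
          rw [if_neg (by omega)]
          simp [hN1, hf2z]
        have e1 : f1 (n + 1) = u := by rw [hN1, hf1N]
        have hE := hf1s n (by omega)
        rw [e1] at hE
        rw [e2]
        simpa [hπ, hn2] using hE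
      · push_neg at hn2
        set d := n - N1 with hd
        set m := d % N2 with hm
        have hmlt : m < N2 := Nat.mod_lt _ (by omega)
        have e1 : π n = f2 m := by
          simp only [hπ]; rw [if_neg (by omega)]
        have e2 : π (n + 1) = f2 ((d + 1) % N2) := by
          simp only [hπ]
          rw [if_neg (by omega), show n + 1 - N1 = d + 1 by omega]
        have key : (d + 1) % N2 = (m + 1) % N2 := by
          conv_lhs => rw [Nat.add_mod]
          conv_rhs => rw [Nat.add_mod, Nat.mod_eq_of_lt hmlt]
        have hE := hf2step m hmlt
        rcases lt_or_eq_of_le (Nat.succ_le_of_lt hmlt) with h | h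
        · rw [e1, e2, key, Nat.mod_eq_of_lt h]; exact hE
        · have h' : m + 1 = N2 := h
          rw [e1, e2, key, h', Nat.mod_self, hf2z]
          rw [h', hf2e] at hE
          exact hE
  · apply Set.infinite_of_injective_forall_mem (f := fun k : ℕ => N1 + k * N2)
    · intro a b hab
      simp only at hab
      exact Nat.eq_of_mul_eq_mul_right (show 0 < N2 by omega) (Nat.add_left_cancel hab)
    · intro k; exact hπu k

/-- Co-Büchi ranking characterization: every infinite path from `v0` visits the
rejecting set `F` only finitely often iff there is a ranking function that strictly
decreases on edges leaving `F`-states reachable from `v0` and does not increase on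
other reachable edges. -/
theorem cobuchi_ranking {V : Type} [Finite V] (E : V → V → Prop) (v0 : V) (F : Set V) :
    (∀ π : ℕ → V, π 0 = v0 → (∀ n, E (π n) (π (n + 1))) → {n | π n ∈ F}.Finite) ↔
    (∃ ρ : V → ℕ, ∀ u v, E u v → Relation.ReflTransGen E v0 u →
       (u ∈ F → ρ v < ρ u) ∧ (u ∉ F → ρ v ≤ ρ u)) := by
  constructor
  · intro h
    set R : V → V → Prop := fun a b => Relation.ReflTransGen E v0 a ∧ E a b with hR
    set S : V → Set V := fun u => {f | f ∈ F ∧ Relation.ReflTransGen R u f} with hS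
    refine ⟨fun u => (S u).ncard, ?_⟩
    intro u v huv hreach
    have hsub : S v ⊆ S u := by
      intro f hf
      exact ⟨hf.1, Relation.ReflTransGen.head ⟨hreach, huv⟩ hf.2⟩
    constructor
    · intro huF
      apply Set.ncard_lt_ncard _ (Set.toFinite _)
      refine ⟨hsub, fun hcon => ?_⟩
      have hu : u ∈ S v := hcon ⟨huF, Relation.ReflTransGen.refl⟩
      have hvu : Relation.ReflTransGen E v u :=
        Relation.ReflTransGen.mono (r := R) (p := E) (fun a b hab => hab.2) v u hu.2
      obtain ⟨π, hπ0, hπs, hπinf⟩ := exists_infinite_path hreach huv hvu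
      have hfin := h π hπ0 hπs
      have : {n | π n ∈ F}.Infinite :=
        hπinf.mono (fun n hn => by rw [Set.mem_setOf_eq] at hn ⊢; rw [hn]; exact huF)
      exact this hfin
    · intro _
      exact Set.ncard_le_ncard hsub (Set.toFinite _)
  · rintro ⟨ρ, hρ⟩ π hπ0 hπs
    have hreach : ∀ n, Relation.ReflTransGen E v0 (π n) := by
      intro n
      induction n with
      | zero => rw [hπ0]
      | succ n ih => exact ih.tail (hπs n)
    have hle : ∀ n, ρ (π (n + 1)) ≤ ρ (π n) := by
      intro n
      by_cases hF : π n ∈ F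
      · exact Nat.le_of_lt ((hρ _ _ (hπs n) (hreach n)).1 hF)
      · exact (hρ _ _ (hπs n) (hreach n)).2 hF
    have hmono : ∀ m n, m ≤ n → ρ (π n) ≤ ρ (π m) := by
      intro m n hmn
      induction n with
      | zero => have : m = 0 := by omega
                rw [this]
      | succ n ih =>
        by_cases h : m ≤ n
        · exact le_trans (hle n) (ih h)
        · have : m = n + 1 := by omega
          rw [this]
    by_contra hcon
    have hinf : {n | π n ∈ F}.Infinite := hcon
    have key : ∀ k, ∃ n, ρ (π n) + k ≤ ρ (π 0) := by
      intro k
      induction k with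
      | zero => exact ⟨0, by omega⟩
      | succ k ih =>
        obtain ⟨n, hn⟩ := ih
        obtain ⟨m, hm, hnm⟩ := hinf.exists_gt n
        have h1 : ρ (π (m + 1)) < ρ (π m) := (hρ _ _ (hπs m) (hreach m)).1 hm
        have h2 : ρ (π m) ≤ ρ (π n) := hmono n m (le_of_lt hnm)
        exact ⟨m + 1, by omega⟩
    obtain ⟨n, hn⟩ := key (ρ (π 0) + 1)
    omega
end

section
/- Let G = (V, E) be a finite directed graph, v₀ ∈ V, and F ⊆ V a set of 'accepting' vertices. Then the following are equivalent: (a) there exists an infinite path of G starting at v₀ that visits F infinitely often; (b) there exist a set R ⊆ V with v₀ ∈ R and a function ρ : V → ℕ such that for every u ∈ R there is an edge (u, v) ∈ E with v ∈ R and (u ∈ F or ρ(u) > ρ(v)). -/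
/-- Büchi ranking characterization: there is an infinite path from `v0` visiting
the accepting set `F` infinitely often iff there are a set `R ∋ v0` and a ranking
function `ρ` such that every `u ∈ R` has an `E`-successor `v ∈ R` with
`u ∈ F` or `ρ u > ρ v`. -/
theorem buchi_ranking {V : Type} [Finite V] (E : V → V → Prop) (v0 : V) (F : Set V) :
    (∃ π : ℕ → V, π 0 = v0 ∧ (∀ n, E (π n) (π (n + 1))) ∧ {n | π n ∈ F}.Infinite) ↔
    (∃ R : Set V, ∃ ρ : V → ℕ, v0 ∈ R ∧
       ∀ u ∈ R, ∃ v, E u v ∧ v ∈ R ∧ (u ∈ F ∨ ρ v < ρ u)) := by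
  classical
  constructor
  · rintro ⟨π, h0, hE, hInf⟩
    have hF : ∀ n : ℕ, ∃ m, n ≤ m ∧ π m ∈ F := by
      intro n
      obtain ⟨m, hmF, hlt⟩ := hInf.exists_gt n
      exact ⟨m, le_of_lt hlt, hmF⟩
    set d : ℕ → ℕ := fun n => Nat.find (hF n) with hddef
    have hd : ∀ n, n ≤ d n ∧ π (d n) ∈ F := fun n => Nat.find_spec (hF n)
    refine ⟨Set.range π, fun u => sInf {k | ∃ n, π n = u ∧ d n - n = k}, ⟨0, h0⟩, ?_⟩
    rintro u ⟨n0, hn0⟩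
    have hne : {k | ∃ n, π n = u ∧ d n - n = k}.Nonempty := ⟨d n0 - n0, n0, hn0, rfl⟩
    obtain ⟨n, hnu, hdn⟩ := Nat.sInf_mem hne
    refine ⟨π (n + 1), hnu ▸ hE n, ⟨n + 1, rfl⟩, ?_⟩
    by_cases huF : u ∈ F
    · exact Or.inl huF
    · right
      have h1 := hd n
      have hlt : n < d n := by
        rcases Nat.lt_or_ge n (d n) with h | h
        · exact h
        · have heq : d n = n := le_antisymm h h1.1
          exact absurd (hnu ▸ heq ▸ h1.2) huF
      have hd1 : d (n + 1) ≤ d n := Nat.find_le ⟨hlt, h1.2⟩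
      have hρv : sInf {k | ∃ m, π m = π (n + 1) ∧ d m - m = k} ≤ d (n + 1) - (n + 1) :=
        Nat.sInf_le ⟨n + 1, rfl, rfl⟩
      show sInf {k | ∃ m, π m = π (n + 1) ∧ d m - m = k} <
        sInf {k | ∃ m, π m = u ∧ d m - m = k}
      omega
  · rintro ⟨R, ρ, hv0, h⟩
    choose f hf1 hf2 hf3 using h
    let step : {u // u ∈ R} → {u // u ∈ R} := fun u => ⟨f u.1 u.2, hf2 u.1 u.2⟩
    set π : ℕ → V := fun n => ((step^[n]) ⟨v0, hv0⟩).1 with hπdef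
    have hsucc : ∀ n, π (n + 1) = f (π n) ((step^[n]) ⟨v0, hv0⟩).2 := by
      intro n
      simp only [hπdef, Function.iterate_succ_apply']
      rfl
    refine ⟨π, rfl, fun n => by rw [hsucc]; exact hf1 _ _, ?_⟩
    by_contra hfin
    have hfin' : {n | π n ∈ F}.Finite := Set.not_infinite.mp hfin
    obtain ⟨N, hN⟩ := hfin'.bddAbove
    have hnotF : ∀ n, N < n → π n ∉ F := fun n hn h => absurd (hN h) (not_le.mpr hn)
    have hdec : ∀ n, N < n → ρ (π (n + 1)) < ρ (π n) := by
      intro n hn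
      rcases hf3 (π n) ((step^[n]) ⟨v0, hv0⟩).2 with h | h
      · exact absurd h (hnotF n hn)
      · rw [hsucc]; exact h
    have key : ∀ k, ρ (π (N + 1 + k)) + k ≤ ρ (π (N + 1)) := by
      intro k
      induction k with
      | zero => simp
      | succ k ih =>
        have := hdec (N + 1 + k) (by omega)
        have heq : N + 1 + (k + 1) = (N + 1 + k) + 1 := by omega
        rw [heq]
        omega
    have := key (ρ (π (N + 1)) + 1)
    omega
end

section
/- Let G = (V, E) be a directed graph and {(Aᵢ, Gᵢ)}_{i ∈ [k]} a family of pairs of subsets of V (Streett pairs). Suppose that for each i ∈ [k] there is a function ρᵢ : V → ℕ such that for every edge (u, v) ∈ E at least one of the following holds: u ∈ Gᵢ; or u ∈ Aᵢ, u ∉ Gᵢ, and ρᵢ(u) > ρᵢ(v); or u ∉ Aᵢ ∪ Gᵢ and ρᵢ(u) ≥ ρᵢ(v). Then every infinite path π of G satisfies the Streett condition: for all i ∈ [k], if π visits Aᵢ infinitely often then π visits Gᵢ infinitely often. -/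
/-!
Suppose a path visits `Aᵢ` infinitely often but `Gᵢ` only finitely often. From some point on it
avoids `Gᵢ`, so every edge it takes does not increase `ρᵢ`; a non-increasing sequence in a
well-founded order is eventually constant. But each later visit to `Aᵢ` strictly decreases `ρᵢ`.
-/

open Filter

theorem eventually_succ_eq_of_eventually_succ_le {α : Type*} [PartialOrder α] [WellFoundedLT α]
    {f : ℕ → α} (h : ∀ᶠ n in atTop, f (n + 1) ≤ f n) : ∀ᶠ n in atTop, f (n + 1) = f n := by
  obtain ⟨N, hN⟩ := eventually_atTop.1 h
  have hanti : Antitone fun m => f (N + m) :=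
    antitone_nat_of_succ_le fun m => hN (N + m) (Nat.le_add_right N m)
  obtain ⟨n, hn⟩ := WellFoundedLT.antitone_chain_condition hanti
  refine eventually_atTop.2 ⟨N + n, fun m hm => ?_⟩
  obtain ⟨j, rfl⟩ := Nat.exists_eq_add_of_le hm
  simp only [Nat.add_assoc]
  rw [← hn (n + (j + 1)) (by omega), ← hn (n + j) (by omega)]

theorem frequently_mem_of_streett_ranking {V α : Type*} [PartialOrder α] [WellFoundedLT α]
    {E : V → V → Prop} {A G : Set V} {ρ : V → α}
    (hρ : ∀ u v, E u v →
      u ∈ G ∨ (u ∈ A ∧ u ∉ G ∧ ρ v < ρ u) ∨ (u ∉ A ∧ u ∉ G ∧ ρ v ≤ ρ u))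
    {π : ℕ → V} (hπ : ∀ n, E (π n) (π (n + 1))) (hA : ∃ᶠ n in atTop, π n ∈ A) :
    ∃ᶠ n in atTop, π n ∈ G := by
  by_contra hG
  rw [not_frequently] at hG
  have hle : ∀ᶠ n in atTop, ρ (π (n + 1)) ≤ ρ (π n) := hG.mono fun n hnG => by
    rcases hρ _ _ (hπ n) with hnG' | ⟨-, -, hlt⟩ | ⟨-, -, hle⟩
    exacts [absurd hnG' hnG, hlt.le, hle]
  have hconst := eventually_succ_eq_of_eventually_succ_le (f := ρ ∘ π) hle
  obtain ⟨n, hnA, hnG, hnconst⟩ := (hA.and_eventually (hG.and hconst)).exists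
  rcases hρ _ _ (hπ n) with hnG' | ⟨-, -, hlt⟩ | ⟨hnA', -, -⟩
  exacts [hnG hnG', hlt.ne hnconst, hnA' hnA]

/-- Soundness of the Streett ranking construction: if for each Streett pair
`(A i, G i)` there is a ranking function satisfying the edge conditions, then
every infinite path satisfies the Streett condition. -/
theorem streett_ranking_sound {V : Type} (E : V → V → Prop) (k : ℕ)
    (A G : Fin k → Set V)
    (h : ∀ i : Fin k, ∃ ρ : V → ℕ, ∀ u v, E u v →
      u ∈ G i ∨ (u ∈ A i ∧ u ∉ G i ∧ ρ v < ρ u) ∨ (u ∉ A i ∧ u ∉ G i ∧ ρ v ≤ ρ u)) :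
    ∀ π : ℕ → V, (∀ n, E (π n) (π (n + 1))) →
      ∀ i : Fin k, {n | π n ∈ A i}.Infinite → {n | π n ∈ G i}.Infinite := by
  intro π hπ i hA
  obtain ⟨ρ, hρ⟩ := h i
  exact Nat.frequently_atTop_iff_infinite.1 <|
    frequently_mem_of_streett_ranking hρ hπ (Nat.frequently_atTop_iff_infinite.2 hA)
end

section
/- Let G = (V, E) be a finite directed graph, v₀ ∈ V, and {(Aᵢ, Gᵢ)}_{i ∈ [k]} a family of Streett pairs. If every infinite path of G starting at v₀ satisfies the Streett condition (for all i, infinitely many visits to Aᵢ imply infinitely many visits to Gᵢ), then for each i ∈ [k] there exists ρᵢ : V → ℕ such that for every edge (u, v) with u reachable from v₀: u ∈ Gᵢ, or (u ∈ Aᵢ \ Gᵢ and ρᵢ(u) > ρᵢ(v)), or (u ∉ Aᵢ ∪ Gᵢ and ρᵢ(u) ≥ ρᵢ(v)). -/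
private lemma chain_of_rtg {V : Type} {r : V → V → Prop} {a b : V}
    (h : Relation.ReflTransGen r a b) :
    ∃ m, ∃ c : ℕ → V, c 0 = a ∧ c m = b ∧ ∀ j < m, r (c j) (c (j+1)) := by
  induction h with
  | refl => exact ⟨0, fun _ => a, rfl, rfl, fun j hj => absurd hj (Nat.not_lt_zero j)⟩
  | @tail b' c' hab hbc ih =>
    obtain ⟨m, c, h0, hm, hs⟩ := ih
    refine ⟨m+1, fun n => if n ≤ m then c n else c', by simp [h0], by simp, ?_⟩
    intro j hj
    show r (if j ≤ m then c j else c') (if j+1 ≤ m then c (j+1) else c')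
    rcases Nat.lt_or_ge j m with hjm | hjm
    · rw [if_pos (by omega : j ≤ m), if_pos (by omega : j+1 ≤ m)]
      exact hs j hjm
    · have hj' : j = m := by omega
      subst hj'
      rw [if_pos le_rfl, if_neg (by omega : ¬ j+1 ≤ j), hm]
      exact hbc

/-- Completeness of the Streett ranking construction: if every infinite path from
`v0` of a finite graph satisfies the Streett condition, then for each pair there is
a ranking function satisfying the edge conditions on edges from reachable states. -/
theorem streett_ranking_complete {V : Type} [Finite V] (E : V → V → Prop) (v0 : V)
    (k : ℕ) (A G : Fin k → Set V)
    (h : ∀ π : ℕ → V, π 0 = v0 → (∀ n, E (π n) (π (n + 1))) →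
      ∀ i : Fin k, {n | π n ∈ A i}.Infinite → {n | π n ∈ G i}.Infinite) :
    ∀ i : Fin k, ∃ ρ : V → ℕ, ∀ u v, E u v → Relation.ReflTransGen E v0 u →
      u ∈ G i ∨ (u ∈ A i \ G i ∧ ρ v < ρ u) ∨ (u ∉ A i ∪ G i ∧ ρ v ≤ ρ u) := by
  intro i
  classical
  set E' : V → V → Prop := fun u v => E u v ∧ Relation.ReflTransGen E v0 u ∧ u ∉ G i with hE'def
  set R : V → V → Prop := fun v u => ∃ w x, Relation.ReflTransGen E' u w ∧ w ∈ A i ∧ E' w x ∧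
    Relation.ReflTransGen E' x v with hRdef
  -- irreflexivity of R
  have hirr : ∀ u, ¬ R u u := by
    rintro u ⟨w, x, huw, hwA, hwx, hxu⟩
    have hcyc : Relation.ReflTransGen E' x w := hxu.trans huw
    obtain ⟨m, c, hc0, hcm, hcs⟩ := chain_of_rtg hcyc
    obtain ⟨N, d, hd0, hdN, hds⟩ := chain_of_rtg hwx.2.1
    set M := m + 1 with hM
    set cc : ℕ → V := fun n => if n = 0 then w else c (n - 1) with hccdef
    have hcc0 : cc 0 = w := by simp [hccdef]
    have hccM : cc M = w := by simp [hccdef, hM, hcm]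
    have hccs : ∀ j < M, E' (cc j) (cc (j+1)) := by
      intro j hj
      rcases Nat.eq_zero_or_pos j with h0 | h0
      · subst h0
        have e1 : cc 1 = c 0 := by simp [hccdef]
        rw [hcc0, e1, hc0]; exact hwx
      · have e1 : cc j = c (j - 1) := by
          simp only [hccdef]; rw [if_neg (by omega)]
        have e2 : cc (j+1) = c j := by
          simp only [hccdef]; rw [if_neg (by omega)]; simp
        rw [e1, e2]
        have := hcs (j - 1) (by omega)
        have e3 : j - 1 + 1 = j := by omega
        rwa [e3] at this
    set p : ℕ → V := fun n => cc (n % M) with hpdef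
    have hps : ∀ n, E' (p n) (p (n+1)) := by
      intro n
      have hMpos : 0 < M := by omega
      have h1 : n % M < M := Nat.mod_lt _ hMpos
      have e : (n+1) % M = (n % M + 1) % M := by
        conv_lhs => rw [Nat.add_mod]
        rw [Nat.add_mod_mod]
      have key : ∀ q, (n+1) % M = q → E' (cc (n % M)) (cc q) → E' (p n) (p (n+1)) := by
        intro q hq hcc'
        show E' (cc (n % M)) (cc ((n+1) % M))
        rw [hq]; exact hcc'
      rcases Nat.lt_or_ge (n % M + 1) M with hlt | hge
      · refine key (n % M + 1) (by rw [e, Nat.mod_eq_of_lt hlt]) (hccs _ h1)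
      · have hEq : n % M + 1 = M := by omega
        refine key 0 (by rw [e, hEq, Nat.mod_self]) ?_
        have h5 := hccs (n % M) h1
        rw [hEq] at h5
        rwa [hcc0, ← hccM]
    set π : ℕ → V := fun n => if n < N then d n else p (n - N) with hπdef
    have hπ0 : π 0 = v0 := by
      by_cases hN : 0 < N
      · simp [hπdef, hN, hd0]
      · have hN0 : N = 0 := by omega
        have : π 0 = p 0 := by simp [hπdef, hN0]
        rw [this]
        show cc (0 % M) = v0
        rw [Nat.zero_mod, hcc0]
        rw [hN0] at hdN; rw [← hdN, hd0]
    have hπs : ∀ n, E (π n) (π (n + 1)) := by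
      intro n
      by_cases h1 : n + 1 < N
      · have h2 : n < N := by omega
        have e1 : π n = d n := by simp [hπdef, h2]
        have e2 : π (n+1) = d (n+1) := by simp [hπdef, h1]
        rw [e1, e2]; exact hds n (by omega)
      · by_cases h2 : n < N
        · have hn1 : n + 1 = N := by omega
          have e1 : π n = d n := by simp [hπdef, h2]
          have e2 : π (n+1) = p 0 := by
            simp only [hπdef]
            rw [if_neg h1]
            congr 1; omega
          have e3 : p 0 = w := by show cc (0 % M) = w; rw [Nat.zero_mod, hcc0]
          rw [e1, e2, e3, ← hdN, ← hn1]
          exact hds n (by omega)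
        · have e1 : π n = p (n - N) := by simp [hπdef, h2]
          have e2 : π (n+1) = p (n - N + 1) := by
            simp only [hπdef]
            rw [if_neg h1]
            congr 1; omega
          rw [e1, e2]
          exact (hps (n - N)).1
    have hGfin : ¬ {n | π n ∈ G i}.Infinite := by
      intro hinf
      apply hinf
      apply Set.Finite.subset (Set.finite_Iio N)
      intro n hn
      simp only [Set.mem_Iio]
      by_contra hge
      have h2 : ¬ n < N := by omega
      have e1 : π n = cc ((n - N) % M) := by simp [hπdef, h2, hpdef]
      have hlt : (n - N) % M < M := Nat.mod_lt _ (by omega)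
      simp only [Set.mem_setOf_eq] at hn
      exact (hccs _ hlt).2.2 (by rwa [e1] at hn)
    have hAinf : {n | π n ∈ A i}.Infinite := by
      refine Set.infinite_of_injective_forall_mem (f := fun t : ℕ => N + M * t) ?_ ?_
      · intro a b hab
        simp only at hab
        have : M * a = M * b := by omega
        exact Nat.eq_of_mul_eq_mul_left (by omega) this
      · intro t
        show π (N + M * t) ∈ A i
        have h1 : ¬ N + M * t < N := by omega
        have e1 : π (N + M * t) = p (M * t) := by
          simp only [hπdef]
          rw [if_neg h1]
          congr 1; omega
        rw [e1]
        show cc ((M * t) % M) ∈ A i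
        rw [Nat.mul_mod_right, hcc0]
        exact hwA
    exact hGfin (h π hπ0 hπs i hAinf)
  have hmono : ∀ u v, E' u v → ∀ w, R w v → R w u := by
    rintro u v huv w ⟨w', x', h1, h2, h3, h4⟩
    exact ⟨w', x', Relation.ReflTransGen.head huv h1, h2, h3, h4⟩
  have htrans : ∀ u v, R v u → ∀ w, R w v → R w u := by
    rintro u v ⟨w1, x1, h1, h2, h3, h4⟩ w ⟨w2, x2, g1, g2, g3, g4⟩
    exact ⟨w2, x2, h1.trans (Relation.ReflTransGen.head h3 (h4.trans g1)), g2, g3, g4⟩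
  refine ⟨fun u => {w | R w u}.ncard, ?_⟩
  intro u v huv hreach
  by_cases hG : u ∈ G i
  · exact Or.inl hG
  have hE'uv : E' u v := ⟨huv, hreach, hG⟩
  by_cases hA : u ∈ A i
  · refine Or.inr (Or.inl ⟨⟨hA, hG⟩, ?_⟩)
    have hRvu : R v u := ⟨u, v, Relation.ReflTransGen.refl, hA, hE'uv, Relation.ReflTransGen.refl⟩
    have hsub : {w | R w v} ⊆ {w | R w u} := fun w hw => htrans u v hRvu w hw
    have hss : {w | R w v} ⊂ {w | R w u} :=
      ⟨hsub, fun h' => hirr v (h' hRvu)⟩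
    exact Set.ncard_lt_ncard hss (Set.toFinite _)
  · refine Or.inr (Or.inr ⟨?_, ?_⟩)
    · simp [hA, hG]
    · exact Set.ncard_le_ncard (fun w hw => hmono u v hE'uv w hw) (Set.toFinite _)
end

section
/- Let Q be a finite set, p : Q → ℕ a priority function, and π : ℕ → Q an infinite sequence with Inf(π) the set of elements occurring infinitely often in π. Then the minimum of {p(q) | q ∈ Inf(π)} is even if and only if for every i ≥ 1: if Inf(π) contains some q with p(q) = 2i − 1, then Inf(π) contains some q' with p(q') even and p(q') ≤ 2i − 2. -/
/-!
Only the set `S = p '' InfOcc π` of priorities seen infinitely often matters. Its least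
element is even iff every odd member `n` of `S` is undercut by an even member `< n`: if the
least element is even it undercuts every odd member, and if it is odd nothing in `S` can
undercut it. The Streett pair with index `i` speaks exactly about the odd priority `2i − 1`.
-/

/-- The set of elements occurring infinitely often in `π`. -/
def InfOcc {Q : Type} (π : ℕ → Q) : Set Q := {q | {n | π n = q}.Infinite}

-- For `S = ∅` both sides hold, since `sInf ∅ = 0`.
theorem Nat.even_sInf_iff_forall_odd_mem {S : Set ℕ} :
    Even (sInf S) ↔ ∀ n ∈ S, Odd n → ∃ k ∈ S, Even k ∧ k < n := by
  constructor
  · intro hEven n hn hOdd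
    have hle : sInf S ≤ n := Nat.sInf_le hn
    have hne : sInf S ≠ n := fun h => Nat.not_even_iff_odd.mpr hOdd (h ▸ hEven)
    exact ⟨sInf S, Nat.sInf_mem ⟨n, hn⟩, hEven, lt_of_le_of_ne hle hne⟩
  · intro h
    by_contra hOdd
    rw [Nat.not_even_iff_odd] at hOdd
    have hS : S.Nonempty := Nat.nonempty_of_pos_sInf hOdd.pos
    obtain ⟨k, hk, -, hlt⟩ := h _ (Nat.sInf_mem hS) hOdd
    exact (Nat.sInf_le hk).not_gt hlt

theorem parity_iff_streett_general {Q : Type} (p : Q → ℕ) (π : ℕ → Q) :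
    Even (sInf (p '' InfOcc π)) ↔
      ∀ i : ℕ, 1 ≤ i → (∃ q ∈ InfOcc π, p q = 2 * i - 1) →
        ∃ q' ∈ InfOcc π, Even (p q') ∧ p q' ≤ 2 * i - 2 := by
  rw [Nat.even_sInf_iff_forall_odd_mem]
  constructor
  · rintro h i hi ⟨q, hq, hpq⟩
    obtain ⟨_, ⟨q', hq', rfl⟩, hEven, hlt⟩ := h _ ⟨q, hq, rfl⟩ ⟨i - 1, by omega⟩
    exact ⟨q', hq', hEven, by omega⟩
  · rintro h _ ⟨q, hq, rfl⟩ ⟨j, hj⟩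
    obtain ⟨q', hq', hEven, hle⟩ := h (j + 1) (by omega) ⟨q, hq, by omega⟩
    exact ⟨_, ⟨q', hq', rfl⟩, hEven, by omega⟩

/-- Correctness of the parity-to-Streett translation: the minimal priority seen
infinitely often is even iff for every `i ≥ 1`, whenever priority `2i - 1` occurs
infinitely often, some even priority `≤ 2i - 2` occurs infinitely often. -/
theorem parity_iff_streett {Q : Type} [Finite Q] (p : Q → ℕ) (π : ℕ → Q) :
    Even (sInf (p '' InfOcc π)) ↔
      ∀ i : ℕ, 1 ≤ i → (∃ q ∈ InfOcc π, p q = 2 * i - 1) →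
        ∃ q' ∈ InfOcc π, Even (p q') ∧ p q' ≤ 2 * i - 2 :=
  parity_iff_streett_general p π
end

section
/- Let Σ be a finite alphabet (e.g., Σ = 2^AP for a finite set AP of atomic propositions) and let w, w' : ℕ → Σ be stutter-equivalent infinite words: there exist strictly increasing sequences 0 = i₀ < i₁ < i₂ < … and 0 = j₀ < j₁ < j₂ < … such that for every k, w is constant on [i_k, i_{k+1}), w' is constant on [j_k, j_{k+1}), and these constant values are equal. Then for every LTL formula φ built from atomic propositions, Boolean connectives, and the temporal operators U (until) and derived G, F — but without the next-time operator X — we have w ⊨ φ if and only if w' ⊨ φ. -/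
/-- LTL without the next-time operator: atoms, true, negation, conjunction, until. -/
inductive LTLnX (AP : Type) : Type
  | atom : AP → LTLnX AP
  | tru : LTLnX AP
  | neg : LTLnX AP → LTLnX AP
  | conj : LTLnX AP → LTLnX AP → LTLnX AP
  | untl : LTLnX AP → LTLnX AP → LTLnX AP

/-- Semantics of LTL∖X over infinite words `w : ℕ → Set AP`. -/
def LTLSat {AP : Type} : LTLnX AP → (ℕ → Set AP) → Prop
  | .atom p, w => p ∈ w 0
  | .tru, _ => True
  | .neg φ, w => ¬ LTLSat φ w
  | .conj φ ψ, w => LTLSat φ w ∧ LTLSat ψ w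
  | .untl φ ψ, w =>
      ∃ n, LTLSat ψ (fun m => w (n + m)) ∧ ∀ m < n, LTLSat φ (fun j => w (m + j))

/-- Every position lies in some block `[i k, i (k+1))`. -/
lemma block_exists {i : ℕ → ℕ} (hi0 : i 0 = 0) (hmi : StrictMono i) (p : ℕ) :
    ∃ k, i k ≤ p ∧ p < i (k + 1) := by
  classical
  have hub : ∃ k, p < i k := ⟨p + 1, lt_of_lt_of_le (Nat.lt_succ_self p) hmi.le_apply⟩
  have hK : p < i (Nat.find hub) := Nat.find_spec hub
  have hKpos : 0 < Nat.find hub := by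
    rcases Nat.eq_zero_or_pos (Nat.find hub) with h | h
    · exfalso; rw [h, hi0] at hK; omega
    · exact h
  refine ⟨Nat.find hub - 1, ?_, ?_⟩
  · have := Nat.find_min hub (show Nat.find hub - 1 < Nat.find hub by omega)
    omega
  · have h1 : Nat.find hub - 1 + 1 = Nat.find hub := by omega
    rw [h1]; exact hK

/-- One direction of the until case, stated abstractly. -/
lemma until_forward {i j : ℕ → ℕ}
    (hi0 : i 0 = 0) (hj0 : j 0 = 0) (hmi : StrictMono i) (hmj : StrictMono j)
    (P Q P' Q' : ℕ → Prop)
    (IHP : ∀ k m m', i k ≤ m → m < i (k + 1) → j k ≤ m' → m' < j (k + 1) → P m → P' m')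
    (IHQ : ∀ k m m', i k ≤ m → m < i (k + 1) → j k ≤ m' → m' < j (k + 1) → Q m → Q' m')
    (k m m' : ℕ) (hm1 : i k ≤ m) (hm2 : m < i (k + 1))
    (hm'1 : j k ≤ m') (hm'2 : m' < j (k + 1))
    (h : ∃ n, Q (m + n) ∧ ∀ t < n, P (m + t)) :
    ∃ n, Q' (m' + n) ∧ ∀ t < n, P' (m' + t) := by
  obtain ⟨n, hQ, hP⟩ := h
  obtain ⟨k₂, hk₂1, hk₂2⟩ := block_exists hi0 hmi (m + n)
  by_cases hle : k₂ ≤ k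
  · refine ⟨0, ?_, fun t ht => absurd ht (Nat.not_lt_zero t)⟩
    rw [Nat.add_zero]
    have hlt : m + n < i (k + 1) := lt_of_lt_of_le hk₂2 (hmi.monotone (by omega))
    exact IHQ k (m + n) m' (le_trans hm1 (Nat.le_add_right m n)) hlt hm'1 hm'2 hQ
  · push_neg at hle
    have hk1k₂ : i (k + 1) ≤ i k₂ := hmi.monotone (by omega)
    have hjk : j (k + 1) ≤ j k₂ := hmj.monotone (by omega)
    have hm'le : m' ≤ j k₂ := by omega
    refine ⟨j k₂ - m', ?_, ?_⟩
    · have he : m' + (j k₂ - m') = j k₂ := by omega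
      rw [he]
      exact IHQ k₂ (m + n) (j k₂) hk₂1 hk₂2 le_rfl (hmj (by omega)) hQ
    · intro t ht
      obtain ⟨l, hl1, hl2⟩ := block_exists hj0 hmj (m' + t)
      have hlk₂ : l < k₂ := by
        by_contra hcon
        push_neg at hcon
        have := hmj.monotone hcon
        omega
      have hkl : k ≤ l := by
        by_contra hcon
        push_neg at hcon
        have : j (l + 1) ≤ j k := hmj.monotone (by omega)
        omega
      have hn0 : m < m + n := by
        have : i (k + 1) ≤ m + n := le_trans hk1k₂ hk₂1
        omega
      have hil : i (l + 1) ≤ i k₂ := hmi.monotone (by omega)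
      have hil2 : i l < i (l + 1) := hmi (by omega)
      have hik : i (k + 1) ≤ i (l + 1) := hmi.monotone (by omega)
      have hp1 : i l ≤ max m (i l) := le_max_right _ _
      have hp2 : max m (i l) < i (l + 1) := max_lt (by omega) hil2
      have hpn : max m (i l) < m + n := max_lt hn0 (by omega)
      have hPp : P (max m (i l)) := by
        have h1 := hP (max m (i l) - m) (by omega)
        have hpe : m + (max m (i l) - m) = max m (i l) := by omega
        rwa [hpe] at h1
      exact IHP l (max m (i l)) (m' + t) hp1 hp2 hl1 hl2 hPp

lemma sat_shift_iff {AP : Type}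
    (w w' : ℕ → Set AP) (i j : ℕ → ℕ)
    (hi0 : i 0 = 0) (hj0 : j 0 = 0)
    (hmi : StrictMono i) (hmj : StrictMono j)
    (hw : ∀ k m, i k ≤ m → m < i (k + 1) → w m = w (i k))
    (hw' : ∀ k m, j k ≤ m → m < j (k + 1) → w' m = w' (j k))
    (heq : ∀ k, w (i k) = w' (j k)) :
    ∀ φ : LTLnX AP, ∀ k m m', i k ≤ m → m < i (k + 1) → j k ≤ m' → m' < j (k + 1) →
      (LTLSat φ (fun t => w (m + t)) ↔ LTLSat φ (fun t => w' (m' + t))) := by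
  intro φ
  induction φ with
  | atom p =>
    intro k m m' hm1 hm2 hm'1 hm'2
    have hww : w (m + 0) = w' (m' + 0) := by
      rw [Nat.add_zero, Nat.add_zero, hw k m hm1 hm2, hw' k m' hm'1 hm'2, heq]
    simp only [LTLSat, hww]
  | tru =>
    intro k m m' _ _ _ _
    simp [LTLSat]
  | neg φ ih =>
    intro k m m' hm1 hm2 hm'1 hm'2
    simp only [LTLSat]
    exact not_congr (ih k m m' hm1 hm2 hm'1 hm'2)
  | conj φ ψ ihφ ihψ =>
    intro k m m' hm1 hm2 hm'1 hm'2
    simp only [LTLSat]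
    exact and_congr (ihφ k m m' hm1 hm2 hm'1 hm'2) (ihψ k m m' hm1 hm2 hm'1 hm'2)
  | untl φ ψ ihφ ihψ =>
    intro k m m' hm1 hm2 hm'1 hm'2
    simp only [LTLSat]
    constructor
    · intro h
      simp only [← Nat.add_assoc] at h ⊢
      exact until_forward hi0 hj0 hmi hmj
        (fun p => LTLSat φ (fun t => w (p + t))) (fun p => LTLSat ψ (fun t => w (p + t)))
        (fun p => LTLSat φ (fun t => w' (p + t))) (fun p => LTLSat ψ (fun t => w' (p + t)))
        (fun k m m' a b c d => (ihφ k m m' a b c d).mp)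
        (fun k m m' a b c d => (ihψ k m m' a b c d).mp)
        k m m' hm1 hm2 hm'1 hm'2 h
    · intro h
      simp only [← Nat.add_assoc] at h ⊢
      exact until_forward hj0 hi0 hmj hmi
        (fun p => LTLSat φ (fun t => w' (p + t))) (fun p => LTLSat ψ (fun t => w' (p + t)))
        (fun p => LTLSat φ (fun t => w (p + t))) (fun p => LTLSat ψ (fun t => w (p + t)))
        (fun k m m' a b c d => (ihφ k m' m c d a b).mpr)
        (fun k m m' a b c d => (ihψ k m' m c d a b).mpr)
        k m' m hm'1 hm'2 hm1 hm2 h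

/-- Stutter-invariance of LTL∖X: stutter-equivalent infinite words satisfy the same
formulas of LTL without the next-time operator. -/
theorem ltl_no_next_stutter_invariant {AP : Type} [Finite AP]
    (w w' : ℕ → Set AP) (i j : ℕ → ℕ)
    (hi0 : i 0 = 0) (hj0 : j 0 = 0)
    (hmi : StrictMono i) (hmj : StrictMono j)
    (hw : ∀ k m, i k ≤ m → m < i (k + 1) → w m = w (i k))
    (hw' : ∀ k m, j k ≤ m → m < j (k + 1) → w' m = w' (j k))
    (heq : ∀ k, w (i k) = w' (j k)) :
    ∀ φ : LTLnX AP, LTLSat φ w ↔ LTLSat φ w' := by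
  intro φ
  have h := sat_shift_iff w w' i j hi0 hj0 hmi hmj hw hw' heq φ 0 0 0
    (by omega) (by simpa [hi0] using hmi Nat.zero_lt_one)
    (by omega) (by simpa [hj0] using hmj Nat.zero_lt_one)
  simpa using h
end
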